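/- arXiv:2203.04008 — 5 statements merged into one kernel-verified Lean document; each statement's English description precedes it below -/
import Mathlib

section
/- Let U ~ Beta(u,v) and Z ~ Gamma(u, u+v) (shape u, rate u+v). For every ϱ ∈ [0,1) there exists a constant C_ϱ > 0 such that for all u, v ≥ 1 with u/(u+v) ≤ ϱ and all t ∈ [0,1], one has P(U ≤ t) ≤ C_ϱ · P(Z ≤ t). -/
open Real MeasureTheory Set ProbabilityTheory

/-- Density of the Beta(u,v) distribution on (0,1). -/
noncomputable def betaPDFReal (a b x : ℝ) : ℝ :=
  if x ∈ Set.Ioo (0:ℝ) 1 then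
    Real.Gamma (a + b) / (Real.Gamma a * Real.Gamma b) * x ^ (a - 1) * (1 - x) ^ (b - 1)
  else 0

/-!
For `0 < x < 1` the ratio of the Beta(u, v) density to the Gamma(u, u + v) density is
`Γ(u+v) (1-x)^(v-1) e^((u+v)x) / (Γ(v) (u+v)^u)`. Maximising over `x` (via `z ≤ e^(z-1)`)
bounds it by `Γ(u+v) e^(u+1) ((v-1)/(u+v))^(v-1) / (Γ(v) (u+v)^u)`, and in terms of the
Stirling ratio `R(w) = Γ(w) eʷ / wʷ` this is at most `e (u+v)/v · R(u+v)/R(v)`.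
Now `R(w+1) ≤ R(w)` because `(1 + 1/w)^(w+1) ≥ e`, and log-convexity of `Γ` gives
`R(w+s) ≤ eˢ R(w)` for `0 ≤ s ≤ 1`; hence `R(u+v) ≤ e R(v)`. Since `(u+v)/v ≤ 1/(1-ϱ)`,
the densities, and so the distribution functions, are comparable with `C = e² / (1 - ϱ)`.
-/

namespace Real

theorem Gamma_add_le_mul_rpow {v s : ℝ} (hv : 0 < v) (hs₀ : 0 ≤ s) (hs₁ : s ≤ 1) :
    Gamma (v + s) ≤ Gamma v * v ^ s := by
  rcases hs₀.eq_or_lt with rfl | hs₀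
  · simp
  rcases hs₁.eq_or_lt with rfl | hs₁
  · rw [Gamma_add_one hv.ne', rpow_one, mul_comm]
  have hΓ := Gamma_pos_of_pos hv
  have key := Gamma_mul_add_mul_le_rpow_Gamma_mul_rpow_Gamma hv (by linarith : 0 < v + 1)
    (by linarith : 0 < 1 - s) hs₀ (by ring)
  rw [show (1 - s) * v + s * (v + 1) = v + s by ring, Gamma_add_one hv.ne',
    mul_rpow hv.le hΓ.le, mul_left_comm, ← rpow_add hΓ, show 1 - s + s = 1 by ring,
    rpow_one] at key
  linarith

theorem exp_one_le_one_add_inv_rpow {w : ℝ} (hw : 0 < w) : exp 1 ≤ (1 + w⁻¹) ^ (w + 1) := by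
  have hlog : (w + 1)⁻¹ ≤ log (1 + w⁻¹) := by
    have := one_sub_inv_le_log_of_pos (by positivity : 0 < 1 + w⁻¹)
    rwa [show 1 - (1 + w⁻¹)⁻¹ = (w + 1)⁻¹ by field_simp; ring] at this
  rw [rpow_def_of_pos (by positivity), exp_le_exp]
  calc (1 : ℝ) = (w + 1)⁻¹ * (w + 1) := by field_simp
    _ ≤ log (1 + w⁻¹) * (w + 1) := by gcongr

theorem rpow_le_div_rpow_mul_exp {y c N : ℝ} (hy : 0 ≤ y) (hc : 0 ≤ c) (hN : 0 < N) :
    y ^ c ≤ (c / N) ^ c * exp (N * y - c) := by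
  rcases hc.eq_or_lt with rfl | hc
  · simpa using mul_nonneg hN.le hy
  have hz : N * y / c ≤ exp (N * y / c - 1) := by linarith [add_one_le_exp (N * y / c - 1)]
  calc y ^ c = (c / N) ^ c * (N * y / c) ^ c := by
        rw [← mul_rpow (by positivity) (by positivity)]; field_simp
    _ ≤ (c / N) ^ c * exp (N * y / c - 1) ^ c := by gcongr
    _ = (c / N) ^ c * exp (N * y - c) := by rw [← exp_mul]; field_simp

end Real

/-- By Stirling's formula `stirlingRatio w ~ √(2π / w)`. -/
noncomputable def stirlingRatio (w : ℝ) : ℝ := Gamma w * exp w / w ^ w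

theorem stirlingRatio_pos {w : ℝ} (hw : 0 < w) : 0 < stirlingRatio w := by
  have := Gamma_pos_of_pos hw
  unfold stirlingRatio; positivity

theorem stirlingRatio_add_one_le {w : ℝ} (hw : 0 < w) :
    stirlingRatio (w + 1) ≤ stirlingRatio w := by
  have hΓ := Gamma_pos_of_pos hw
  have he := exp_one_le_one_add_inv_rpow hw
  rw [show 1 + w⁻¹ = (w + 1) / w by field_simp, div_rpow (by positivity) hw.le,
    le_div_iff₀ (by positivity)] at he
  unfold stirlingRatio
  rw [Gamma_add_one hw.ne', exp_add, div_le_div_iff₀ (by positivity) (by positivity)]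
  calc w * Gamma w * (exp w * exp 1) * w ^ w = Gamma w * exp w * (exp 1 * w ^ (w + 1)) := by
        rw [rpow_add_one hw.ne']; ring
    _ ≤ Gamma w * exp w * (w + 1) ^ (w + 1) := by gcongr

theorem stirlingRatio_add_nat_le {w : ℝ} (hw : 0 < w) (n : ℕ) :
    stirlingRatio (w + n) ≤ stirlingRatio w := by
  induction n with
  | zero => simp
  | succ n ih =>
    push_cast
    rw [← add_assoc]
    exact (stirlingRatio_add_one_le (by positivity)).trans ih

theorem stirlingRatio_add_le_exp_mul {w s : ℝ} (hw : 0 < w) (hs₀ : 0 ≤ s) (hs₁ : s ≤ 1) :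
    stirlingRatio (w + s) ≤ exp s * stirlingRatio w := by
  have hΓ := Gamma_pos_of_pos hw
  have hpow : w ^ w * w ^ s ≤ (w + s) ^ (w + s) := by
    rw [← rpow_add hw]; gcongr
    all_goals linarith
  unfold stirlingRatio
  rw [exp_add, div_le_iff₀ (by positivity)]
  calc Gamma (w + s) * (exp w * exp s)
      ≤ Gamma w * w ^ s * (exp w * exp s) := by gcongr; exact Gamma_add_le_mul_rpow hw hs₀ hs₁
    _ = exp s * (Gamma w * exp w / w ^ w) * (w ^ w * w ^ s) := by field_simp
    _ ≤ exp s * (Gamma w * exp w / w ^ w) * (w + s) ^ (w + s) := by gcongr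

theorem stirlingRatio_add_le {w u : ℝ} (hw : 0 < w) (hu : 0 ≤ u) :
    stirlingRatio (w + u) ≤ exp 1 * stirlingRatio w := by
  set s := u - ⌊u⌋₊
  have hs₀ : 0 ≤ s := sub_nonneg.2 (Nat.floor_le hu)
  have hs₁ : s ≤ 1 := by linarith [Nat.lt_floor_add_one u]
  calc stirlingRatio (w + u) = stirlingRatio (w + s + ⌊u⌋₊) := by
        simp only [s, add_assoc, sub_add_cancel]
    _ ≤ stirlingRatio (w + s) := stirlingRatio_add_nat_le (by linarith) _
    _ ≤ exp s * stirlingRatio w := stirlingRatio_add_le_exp_mul hw hs₀ hs₁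
    _ ≤ exp 1 * stirlingRatio w := by gcongr; exact (stirlingRatio_pos hw).le

theorem Gamma_add_mul_exp_le {w u : ℝ} (hw : 0 < w) (hu : 0 ≤ u) :
    Gamma (w + u) * exp u * w ^ w ≤ exp 1 * Gamma w * (w + u) ^ (w + u) := by
  have h := stirlingRatio_add_le hw hu
  calc Gamma (w + u) * exp u * w ^ w
      = stirlingRatio (w + u) * (w + u) ^ (w + u) * w ^ w / exp w := by
        unfold stirlingRatio; rw [exp_add]; field_simp
    _ ≤ exp 1 * stirlingRatio w * (w + u) ^ (w + u) * w ^ w / exp w := by gcongr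
    _ = exp 1 * Gamma w * (w + u) ^ (w + u) := by unfold stirlingRatio; field_simp

theorem Gamma_add_mul_rpow_mul_exp_le {u v x : ℝ} (hu : 0 < u) (hv : 1 ≤ v) (hx₁ : x < 1) :
    Gamma (u + v) * (1 - x) ^ (v - 1) * exp ((u + v) * x) ≤
      exp 2 * ((u + v) / v) * Gamma v * (u + v) ^ u := by
  set N := u + v
  have hN : 0 < N := by positivity
  have hv₀ : 0 < v := by positivity
  have hsup : (1 - x) ^ (v - 1) ≤ (v / N) ^ (v - 1) * exp (N * (1 - x) - (v - 1)) :=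
    (rpow_le_div_rpow_mul_exp (by linarith) (by linarith) hN).trans (by gcongr; linarith)
  have hΓ : Gamma N * exp u * v ^ v ≤ exp 1 * Gamma v * N ^ N := by
    simpa only [N, add_comm u v] using Gamma_add_mul_exp_le hv₀ hu.le
  have hpowN : N ^ N = N ^ u * N ^ (v - 1) * N := by
    rw [← rpow_add hN, ← rpow_add_one hN.ne']; simp only [N]; ring_nf
  have hpowv : v ^ v = v ^ (v - 1) * v := by
    rw [← rpow_add_one hv₀.ne']; ring_nf
  calc Gamma N * (1 - x) ^ (v - 1) * exp (N * x)
      ≤ Gamma N * ((v / N) ^ (v - 1) * exp (N * (1 - x) - (v - 1))) * exp (N * x) := by gcongr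
    _ = Gamma N * (v ^ (v - 1) / N ^ (v - 1)) * exp (N * (1 - x) - (v - 1) + N * x) := by
        rw [div_rpow hv₀.le hN.le, exp_add]; ring
    _ = Gamma N * exp u * v ^ v * (exp 1 / (v * N ^ (v - 1))) := by
        rw [show N * (1 - x) - (v - 1) + N * x = u + 1 by simp only [N]; ring, exp_add, hpowv]
        field_simp
    _ ≤ exp 1 * Gamma v * N ^ N * (exp 1 / (v * N ^ (v - 1))) := by gcongr
    _ = exp 2 * (N / v) * Gamma v * N ^ u := by
        rw [hpowN, show (2 : ℝ) = 1 + 1 by norm_num, exp_add]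
        field_simp

theorem betaPDFReal_nonneg {u v : ℝ} (hu : 0 < u) (hv : 0 < v) (x : ℝ) :
    0 ≤ _root_.betaPDFReal u v x := by
  unfold _root_.betaPDFReal
  split_ifs with hx
  · obtain ⟨hx₀, hx₁⟩ := hx
    have := Gamma_pos_of_pos hu
    have := Gamma_pos_of_pos hv
    have := Gamma_pos_of_pos (add_pos hu hv)
    have : 0 ≤ 1 - x := by linarith
    positivity
  · rfl

theorem betaPDFReal_le_mul_gammaPDFReal {u v : ℝ} (hu : 0 < u) (hv : 1 ≤ v) (x : ℝ) :
    _root_.betaPDFReal u v x ≤ exp 2 * ((u + v) / v) * gammaPDFReal u (u + v) x := by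
  have hN : 0 < u + v := by linarith
  unfold _root_.betaPDFReal
  split_ifs with hx
  · obtain ⟨hx₀, hx₁⟩ := hx
    have := Gamma_pos_of_pos hu
    have := Gamma_pos_of_pos (by linarith : 0 < v)
    rw [gammaPDFReal, if_pos hx₀.le]
    calc Gamma (u + v) / (Gamma u * Gamma v) * x ^ (u - 1) * (1 - x) ^ (v - 1)
        = Gamma (u + v) * (1 - x) ^ (v - 1) * exp ((u + v) * x) *
            (x ^ (u - 1) * exp (-((u + v) * x)) / (Gamma u * Gamma v)) := by
          rw [exp_neg]; field_simp
      _ ≤ exp 2 * ((u + v) / v) * Gamma v * (u + v) ^ u *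
            (x ^ (u - 1) * exp (-((u + v) * x)) / (Gamma u * Gamma v)) := by
          exact mul_le_mul_of_nonneg_right (Gamma_add_mul_rpow_mul_exp_le hu hv hx₁)
            (by positivity)
      _ = exp 2 * ((u + v) / v) *
            ((u + v) ^ u / Gamma u * x ^ (u - 1) * exp (-((u + v) * x))) := by
          field_simp
  · have := gammaPDFReal_nonneg hu hN x
    positivity

theorem ProbabilityTheory.integrable_gammaPDFReal {a r : ℝ} (ha : 0 < a) (hr : 0 < r) :
    Integrable (gammaPDFReal a r) := by
  refine ⟨(measurable_gammaPDFReal a r).aestronglyMeasurable, ?_⟩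
  rw [hasFiniteIntegral_iff_ofReal (ae_of_all _ (gammaPDFReal_nonneg ha hr))]
  exact (lintegral_gammaPDF_eq_one ha hr).trans_lt ENNReal.one_lt_top

/-- Comparison of the Beta(u,v) c.d.f. with the Gamma(u, u+v) c.d.f. -/
theorem beta_cdf_le_gamma_cdf (ϱ : ℝ) (hϱ : ϱ ∈ Set.Ico (0:ℝ) 1) :
    ∃ C : ℝ, 0 < C ∧ ∀ u v : ℝ, 1 ≤ u → 1 ≤ v → u / (u + v) ≤ ϱ →
      ∀ t ∈ Set.Icc (0:ℝ) 1,
        (∫ x in Set.Iic t, _root_.betaPDFReal u v x) ≤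
          C * ∫ x in Set.Iic t, gammaPDFReal u (u + v) x := by
  have hϱ₁ : 0 < 1 - ϱ := sub_pos.2 hϱ.2
  refine ⟨exp 2 / (1 - ϱ), by positivity, fun u v hu hv hϱuv t _ ↦ ?_⟩
  have hu₀ : 0 < u := by linarith
  have hN : 0 < u + v := by linarith
  have hratio : (u + v) / v ≤ 1 / (1 - ϱ) := by
    rw [div_le_iff₀ hN] at hϱuv
    rw [div_le_div_iff₀ (by linarith) hϱ₁]
    linarith
  have hdensity (x : ℝ) :
      _root_.betaPDFReal u v x ≤ exp 2 / (1 - ϱ) * gammaPDFReal u (u + v) x :=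
    (betaPDFReal_le_mul_gammaPDFReal hu₀ hv x).trans <| by
      rw [div_eq_mul_one_div (exp 2)]
      gcongr
      exact gammaPDFReal_nonneg hu₀ hN x
  rw [← integral_const_mul]
  exact integral_mono_of_nonneg (ae_of_all _ (betaPDFReal_nonneg hu₀ (by linarith)))
    ((integrable_gammaPDFReal hu₀ hN).const_mul _).restrict (ae_of_all _ hdensity)
end

section
/- Let u : [0,1] × [0,4) → ℝ be an upper semicontinuous viscosity sub-solution of ∂_t f + ∂_x f + (∂_x f)² = 0 on (0,1)×(0,∞) with boundary condition u(x,0) ≤ 0 for x ∈ (0,1] (at boundary points either the viscosity sub-solution inequality or the boundary inequality holds), satisfying 0 ≤ u(x,t) ≤ 1-x for all (x,t). Then u(x,t) ≤ t/4 for all x ∈ (0,1] and t ∈ [0,4); in particular u(x,0) = 0 for all x ∈ (0,1]. -/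
open Real Set

/-- The parabolic boundary `∂Ω = ((0,1]×{0}) ∪ ({0}×(0,∞)) ∪ ({1}×(0,∞))`. -/
def parabolicBoundary : Set (ℝ × ℝ) :=
  (Set.Ioc 0 1 ×ˢ {0}) ∪ ({0} ×ˢ Set.Ioi 0) ∪ ({1} ×ˢ Set.Ioi 0)

/-- The boundary condition: `1` on `{0}×(0,∞)`, `0` elsewhere on the boundary. -/
noncomputable def BC (p : ℝ × ℝ) : ℝ := if p.1 = 0 then 1 else 0

/-- `u` satisfies the viscosity inequality for sub-solutions of
`∂_t f + ∂_x f + (∂_x f)² = 0` at the point `p`, relative to the domain `D`. -/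
def SubSolAt (u : ℝ × ℝ → ℝ) (D : Set (ℝ × ℝ)) (p : ℝ × ℝ) : Prop :=
  ∀ φ : ℝ × ℝ → ℝ, ContDiff ℝ (⊤ : ℕ∞) φ →
    IsLocalMaxOn (fun q => u q - φ q) D p →
    fderiv ℝ φ p (0, 1) + fderiv ℝ φ p (1, 0) + (fderiv ℝ φ p (1, 0)) ^ 2 ≤ 0

/- ### Auxiliary: maximum of an upper semicontinuous function on a compact set -/

lemma usc_exists_max {s : Set (ℝ × ℝ)} (hs : IsCompact s) (hne : s.Nonempty)
    {f : ℝ × ℝ → ℝ} (hf : UpperSemicontinuousOn f s) :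
    ∃ p ∈ s, ∀ q ∈ s, f q ≤ f p := by
  have hT : ∀ c : ℝ, IsClosed {y | y ∈ s ∧ c ≤ f y} := by
    intro c
    apply isClosed_of_closure_subset
    intro z hz
    have hzs : z ∈ s := hs.isClosed.closure_subset
      (closure_mono (fun y hy => hy.1) hz)
    refine ⟨hzs, ?_⟩
    by_contra hlt
    push_neg at hlt
    have hev : ∀ᶠ y in nhdsWithin z s, f y < c := hf z hzs c hlt
    have hneB : (nhdsWithin z {y | y ∈ s ∧ c ≤ f y}).NeBot :=
      mem_closure_iff_nhdsWithin_neBot.mp hz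
    have hev' : ∀ᶠ y in nhdsWithin z {y | y ∈ s ∧ c ≤ f y}, f y < c :=
      hev.filter_mono (nhdsWithin_mono z (fun y hy => hy.1))
    have hev'' : ∀ᶠ y in nhdsWithin z {y | y ∈ s ∧ c ≤ f y}, c ≤ f y :=
      eventually_nhdsWithin_of_forall (fun y hy => hy.2)
    obtain ⟨y, h1, h2⟩ := (hev'.and hev'').exists
    linarith
  obtain ⟨x₀, hx₀⟩ := hne
  have hne' : Nonempty s := ⟨⟨x₀, hx₀⟩⟩
  set C : s → Set (ℝ × ℝ) := fun i => {y | y ∈ s ∧ f i ≤ f y} with hC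
  have hdir : Directed (· ⊇ ·) C := by
    intro i j
    rcases le_total (f i) (f j) with h | h
    · exact ⟨j, fun y hy => ⟨hy.1, le_trans h hy.2⟩, fun y hy => hy⟩
    · exact ⟨i, fun y hy => hy, fun y hy => ⟨hy.1, le_trans h hy.2⟩⟩
  have hco : ∀ i, IsCompact (C i) := fun i =>
    hs.of_isClosed_subset (hT _) (fun y hy => hy.1)
  have hnon : ∀ i, (C i).Nonempty := fun i => ⟨i, i.2, le_refl _⟩
  obtain ⟨p, hp⟩ := IsCompact.nonempty_iInter_of_directed_nonempty_isCompact_isClosed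
    C hdir hnon hco (fun i => hT _)
  have hps : p ∈ s := (mem_iInter.mp hp ⟨x₀, hx₀⟩).1
  exact ⟨p, hps, fun q hq => (mem_iInter.mp hp ⟨q, hq⟩).2⟩

/- ### The test function and its derivatives -/

/-- The smooth test function `φ(x,t) = t/4 + σ((4-t)²+c²)⁻¹ + K(x²+b²)⁻¹`. -/
noncomputable def phi (σ K b c : ℝ) (p : ℝ × ℝ) : ℝ :=
  p.2 / 4 + σ * ((4 - p.2) ^ 2 + c ^ 2)⁻¹ + K * (p.1 ^ 2 + b ^ 2)⁻¹

lemma phi_contDiff {σ K b c : ℝ} (hb : 0 < b) (hc : 0 < c) :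
    ContDiff ℝ (⊤ : ℕ∞) (phi σ K b c) := by
  have h1 : ∀ q : ℝ × ℝ, (4 - q.2) ^ 2 + c ^ 2 ≠ 0 := by
    intro q; positivity
  have h2 : ∀ q : ℝ × ℝ, q.1 ^ 2 + b ^ 2 ≠ 0 := by
    intro q; positivity
  unfold phi
  exact ((contDiff_snd.div_const 4).add
      (contDiff_const.mul
        ((((contDiff_const.sub contDiff_snd).pow 2).add contDiff_const).inv h1))).add
    (contDiff_const.mul (((contDiff_fst.pow 2).add contDiff_const).inv h2))

lemma phiF_hasDerivAt {K b : ℝ} (hb : 0 < b) (x : ℝ) :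
    HasDerivAt (fun y : ℝ => K * (y ^ 2 + b ^ 2)⁻¹)
      (K * (-(2 * x) / (x ^ 2 + b ^ 2) ^ 2)) x := by
  have hden : (0 : ℝ) < x ^ 2 + b ^ 2 := by positivity
  have h1 : HasDerivAt (fun y : ℝ => y ^ 2 + b ^ 2) (2 * x) x := by
    simpa using (hasDerivAt_pow 2 x).add_const (b ^ 2)
  exact (h1.inv hden.ne').const_mul K

lemma phiG_hasDerivAt {σ c : ℝ} (hc : 0 < c) (t : ℝ) :
    HasDerivAt (fun s : ℝ => s / 4 + σ * ((4 - s) ^ 2 + c ^ 2)⁻¹)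
      (1 / 4 + σ * (2 * (4 - t) / ((4 - t) ^ 2 + c ^ 2) ^ 2)) t := by
  have hden : (0 : ℝ) < (4 - t) ^ 2 + c ^ 2 := by positivity
  have h3 : HasDerivAt (fun s : ℝ => 4 - s) (-1) t := by
    simpa using (hasDerivAt_id t).const_sub 4
  have h4 : HasDerivAt (fun s : ℝ => (4 - s) ^ 2 + c ^ 2)
      (2 * (4 - t) ^ 1 * (-1)) t := by
    exact ((h3.pow 2).add_const (c ^ 2))
  have h5 := (h4.inv hden.ne').const_mul σ
  have h6 : HasDerivAt (fun s : ℝ => s / 4) (1 / 4) t := (hasDerivAt_id t).div_const 4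
  have h7 := h6.add h5
  refine h7.congr_deriv ?_
  ring

lemma phi_hasFDerivAt {σ K b c : ℝ} (hb : 0 < b) (hc : 0 < c) (p : ℝ × ℝ) :
    HasFDerivAt (phi σ K b c)
      ((1 / 4 + σ * (2 * (4 - p.2) / ((4 - p.2) ^ 2 + c ^ 2) ^ 2)) •
          ContinuousLinearMap.snd ℝ ℝ ℝ +
        (K * (-(2 * p.1) / (p.1 ^ 2 + b ^ 2) ^ 2)) •
          ContinuousLinearMap.fst ℝ ℝ ℝ) p := by
  have h1 := HasDerivAt.comp_hasFDerivAt (𝕜 := ℝ) p (phiG_hasDerivAt (σ := σ) hc p.2)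
    (hasFDerivAt_snd (𝕜 := ℝ) (E := ℝ) (F := ℝ) (p := p))
  have h2 := HasDerivAt.comp_hasFDerivAt (𝕜 := ℝ) p (phiF_hasDerivAt (K := K) hb p.1)
    (hasFDerivAt_fst (𝕜 := ℝ) (E := ℝ) (F := ℝ) (p := p))
  exact h1.add h2

/- ### The key comparison bound -/

set_option maxHeartbeats 1000000 in
lemma key_bound (u : ℝ × ℝ → ℝ)
    (husc : UpperSemicontinuousOn u (Set.Icc 0 1 ×ˢ Set.Ico (0:ℝ) 4))
    (hbound : ∀ p ∈ Set.Icc 0 1 ×ˢ Set.Ico (0:ℝ) 4, 0 ≤ u p ∧ u p ≤ 1 - p.1)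
    (hint : ∀ p : ℝ × ℝ, p.1 ∈ Set.Ioo (0:ℝ) 1 → p.2 ∈ Set.Ioo (0:ℝ) 4 →
      SubSolAt u (Set.Icc 0 1 ×ˢ Set.Ico (0:ℝ) 4) p)
    (hbd : ∀ p ∈ parabolicBoundary, p ∈ Set.Icc 0 1 ×ˢ Set.Ico (0:ℝ) 4 →
      SubSolAt u (Set.Icc 0 1 ×ˢ Set.Ico (0:ℝ) 4) p ∨ u p ≤ BC p)
    (σ K ε δ : ℝ) (hσ : 0 < σ) (hK : 0 < K) (hε : 0 < ε) (hδ : 0 < δ)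
    (hε1 : ε ≤ 1) (hδ4 : δ < 4)
    (hεK : 2 + σ + K ≤ K / (2 * ε ^ 2)) (hδσ : 2 + σ + K ≤ σ / (2 * δ ^ 2)) :
    ∀ q ∈ Set.Icc 0 1 ×ˢ Set.Ico (0:ℝ) 4, u q ≤ phi σ K ε δ q := by
  set D : Set (ℝ × ℝ) := Set.Icc 0 1 ×ˢ Set.Ico (0:ℝ) 4 with hD
  set C : Set (ℝ × ℝ) := Set.Icc ε 1 ×ˢ Set.Icc 0 (4 - δ) with hCdef
  have hCD : C ⊆ D := by
    intro q hq
    obtain ⟨h1, h2⟩ := hq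
    exact ⟨⟨le_trans hε.le h1.1, h1.2⟩, ⟨h2.1, by linarith [h2.2]⟩⟩
  have hCco : IsCompact C := isCompact_Icc.prod isCompact_Icc
  have hCne : C.Nonempty := ⟨(1, 0), ⟨⟨hε1, le_refl 1⟩, ⟨le_refl 0, show (0:ℝ) ≤ 4 - δ by linarith⟩⟩⟩
  have hφc : Continuous (phi σ K ε δ) := (phi_contDiff hε hδ).continuous
  -- upper semicontinuity of u - φ on C
  have hv : UpperSemicontinuousOn (fun q => u q - phi σ K ε δ q) C := by
    have h1 : UpperSemicontinuousOn u C := husc.mono hCD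
    have h2 : UpperSemicontinuousOn (fun q => -(phi σ K ε δ q)) C :=
      (hφc.neg.continuousOn (s := C)).upperSemicontinuousOn
    simpa [sub_eq_add_neg] using h1.add h2
  obtain ⟨p, hpC, hpmax⟩ := usc_exists_max hCco hCne hv
  obtain ⟨⟨hx1, hx2⟩, ⟨ht1, ht2⟩⟩ := hpC
  have hpC' : p ∈ C := ⟨⟨hx1, hx2⟩, ⟨ht1, ht2⟩⟩
  have hpD : p ∈ D := hCD hpC'
  -- nonnegativity of φ on D
  have hφ_nonneg : ∀ q ∈ D, 0 ≤ phi σ K ε δ q := by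
    intro q hq
    have ht : 0 ≤ q.2 := hq.2.1
    have t2 : 0 ≤ σ * ((4 - q.2) ^ 2 + δ ^ 2)⁻¹ := by positivity
    have t3 : 0 ≤ K * (q.1 ^ 2 + ε ^ 2)⁻¹ := by positivity
    have t1 : 0 ≤ q.2 / 4 := by linarith
    unfold phi; linarith
  -- lower bound on the value at (1,0)
  have h10D : ((1 : ℝ), (0 : ℝ)) ∈ D := ⟨⟨zero_le_one, le_refl 1⟩, ⟨le_refl 0, by norm_num⟩⟩
  have hv10 : -(σ + K) ≤ u (1, 0) - phi σ K ε δ (1, 0) := by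
    have hu0 : 0 ≤ u (1, 0) := (hbound (1, 0) h10D).1
    have h1 : σ * ((4 - (0:ℝ)) ^ 2 + δ ^ 2)⁻¹ ≤ σ := by
      have h16 : (1 : ℝ) ≤ (4 - (0:ℝ)) ^ 2 + δ ^ 2 := by nlinarith [sq_nonneg δ]
      have := inv_le_one_of_one_le₀ h16
      nlinarith
    have h2 : K * ((1:ℝ) ^ 2 + ε ^ 2)⁻¹ ≤ K := by
      have h16 : (1 : ℝ) ≤ (1:ℝ) ^ 2 + ε ^ 2 := by nlinarith [sq_nonneg ε]
      have := inv_le_one_of_one_le₀ h16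
      nlinarith
    have hphi : phi σ K ε δ (1, 0) =
        0 / 4 + σ * ((4 - (0:ℝ)) ^ 2 + δ ^ 2)⁻¹ + K * ((1:ℝ) ^ 2 + ε ^ 2)⁻¹ := rfl
    rw [hphi]
    nlinarith
  -- p is a maximum over all of D
  have hmaxD : ∀ q ∈ D, u q - phi σ K ε δ q ≤ u p - phi σ K ε δ p := by
    intro q hq
    by_cases hqC : q ∈ C
    · exact hpmax q hqC
    · obtain ⟨⟨hq1a, hq1b⟩, ⟨hq2a, hq2b⟩⟩ := hq
      have hsplit : q.1 < ε ∨ 4 - δ < q.2 := by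
        by_contra h
        push_neg at h
        exact hqC ⟨⟨h.1, hq1b⟩, ⟨hq2a, h.2⟩⟩
      have hu1 : u q ≤ 1 := le_trans (hbound q ⟨⟨hq1a, hq1b⟩, ⟨hq2a, hq2b⟩⟩).2 (by linarith)
      have hb10 : u (1, 0) - phi σ K ε δ (1, 0) ≤ u p - phi σ K ε δ p :=
        hpmax (1, 0) ⟨⟨hε1, le_refl 1⟩, ⟨le_refl 0, show (0:ℝ) ≤ 4 - δ by linarith⟩⟩
      have hφq : 2 + σ + K ≤ phi σ K ε δ q := by
        rcases hsplit with hcase | hcase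
        · -- x small : K-term is large
          have h1 : q.1 ^ 2 + ε ^ 2 ≤ 2 * ε ^ 2 := by nlinarith
          have hpos : (0 : ℝ) < q.1 ^ 2 + ε ^ 2 := by positivity
          have h2 : (2 * ε ^ 2)⁻¹ ≤ (q.1 ^ 2 + ε ^ 2)⁻¹ := by
            apply inv_anti₀ hpos h1
          have h3 : K / (2 * ε ^ 2) ≤ K * (q.1 ^ 2 + ε ^ 2)⁻¹ := by
            rw [div_eq_mul_inv]
            exact mul_le_mul_of_nonneg_left h2 hK.le
          have t2 : 0 ≤ σ * ((4 - q.2) ^ 2 + δ ^ 2)⁻¹ := by positivity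
          have t1 : 0 ≤ q.2 / 4 := by linarith
          unfold phi
          linarith
        · -- t close to 4 : σ-term is large
          have h1 : (4 - q.2) ^ 2 + δ ^ 2 ≤ 2 * δ ^ 2 := by nlinarith
          have hpos : (0 : ℝ) < (4 - q.2) ^ 2 + δ ^ 2 := by positivity
          have h2 : (2 * δ ^ 2)⁻¹ ≤ ((4 - q.2) ^ 2 + δ ^ 2)⁻¹ :=
            inv_anti₀ hpos h1
          have h3 : σ / (2 * δ ^ 2) ≤ σ * ((4 - q.2) ^ 2 + δ ^ 2)⁻¹ := by
            rw [div_eq_mul_inv]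
            exact mul_le_mul_of_nonneg_left h2 hσ.le
          have t3 : 0 ≤ K * (q.1 ^ 2 + ε ^ 2)⁻¹ := by positivity
          have t1 : 0 ≤ q.2 / 4 := by linarith
          unfold phi
          linarith
      linarith
  -- no viscosity inequality can hold at p
  have hPDE : ¬ SubSolAt u D p := by
    intro hs
    have hloc : IsLocalMaxOn (fun q => u q - phi σ K ε δ q) D p :=
      (isMaxOn_iff.mpr hmaxD).localize
    have h := hs (phi σ K ε δ) (phi_contDiff hε hδ) hloc
    rw [(phi_hasFDerivAt hε hδ p).fderiv] at h
    simp only [ContinuousLinearMap.add_apply, ContinuousLinearMap.smul_apply,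
      ContinuousLinearMap.coe_snd', ContinuousLinearMap.coe_fst',
      smul_eq_mul] at h
    set A : ℝ := K * (-(2 * p.1) / (p.1 ^ 2 + ε ^ 2) ^ 2) with hA
    have hsum : (1 / 4 + σ * (2 * (4 - p.2) / ((4 - p.2) ^ 2 + δ ^ 2) ^ 2)) * 1 + A * 0 +
        ((1 / 4 + σ * (2 * (4 - p.2) / ((4 - p.2) ^ 2 + δ ^ 2) ^ 2)) * 0 + A * 1) +
        ((1 / 4 + σ * (2 * (4 - p.2) / ((4 - p.2) ^ 2 + δ ^ 2) ^ 2)) * 0 + A * 1) ^ 2 ≤ 0 := by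
      convert h using 2 <;> ring
    have ht4 : 0 < 4 - p.2 := by linarith
    have hst : 0 < σ * (2 * (4 - p.2) / ((4 - p.2) ^ 2 + δ ^ 2) ^ 2) := by positivity
    nlinarith [sq_nonneg (A + 1 / 2), hsum]
  -- hence the boundary alternative applies at p and u p ≤ 0
  have hup : u p ≤ 0 := by
    have hx0 : 0 < p.1 := lt_of_lt_of_le hε hx1
    rcases eq_or_lt_of_le ht1 with h0 | h0
    · -- p.2 = 0 : bottom boundary
      have hpb : p ∈ parabolicBoundary := by
        left; left
        exact ⟨⟨hx0, hx2⟩, h0.symm⟩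
      rcases hbd p hpb hpD with hss | hbc
      · exact absurd hss hPDE
      · rwa [BC, if_neg hx0.ne'] at hbc
    · rcases eq_or_lt_of_le hx2 with h1 | h1
      · -- p.1 = 1 : right boundary
        have hpb : p ∈ parabolicBoundary := by
          right
          exact ⟨mem_singleton_iff.mpr h1, h0⟩
        rcases hbd p hpb hpD with hss | hbc
        · exact absurd hss hPDE
        · rwa [BC, if_neg hx0.ne'] at hbc
      · -- interior point
        have ht4 : p.2 < 4 := by linarith
        exact absurd (hint p ⟨hx0, h1⟩ ⟨h0, ht4⟩) hPDE
  -- conclude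
  intro q hq
  have h1 := hmaxD q hq
  have h2 := hφ_nonneg p hpD
  linarith

lemma key_bound' (u : ℝ × ℝ → ℝ)
    (husc : UpperSemicontinuousOn u (Set.Icc 0 1 ×ˢ Set.Ico (0:ℝ) 4))
    (hbound : ∀ p ∈ Set.Icc 0 1 ×ˢ Set.Ico (0:ℝ) 4, 0 ≤ u p ∧ u p ≤ 1 - p.1)
    (hint : ∀ p : ℝ × ℝ, p.1 ∈ Set.Ioo (0:ℝ) 1 → p.2 ∈ Set.Ioo (0:ℝ) 4 →
      SubSolAt u (Set.Icc 0 1 ×ˢ Set.Ico (0:ℝ) 4) p)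
    (hbd : ∀ p ∈ parabolicBoundary, p ∈ Set.Icc 0 1 ×ˢ Set.Ico (0:ℝ) 4 →
      SubSolAt u (Set.Icc 0 1 ×ˢ Set.Ico (0:ℝ) 4) p ∨ u p ≤ BC p)
    (σ K : ℝ) (hσ : 0 < σ) (hK : 0 < K) :
    ∀ q ∈ Set.Icc 0 1 ×ˢ Set.Ico (0:ℝ) 4, 0 < q.1 →
      u q ≤ q.2 / 4 + σ / (4 - q.2) ^ 2 + K / q.1 ^ 2 := by
  have hM : (0 : ℝ) < 2 + σ + K := by linarith
  set ε : ℝ := Real.sqrt (K / (2 * (2 + σ + K))) with hεdef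
  set δ : ℝ := Real.sqrt (σ / (2 * (2 + σ + K))) with hδdef
  have hε2 : ε ^ 2 = K / (2 * (2 + σ + K)) := Real.sq_sqrt (by positivity)
  have hδ2 : δ ^ 2 = σ / (2 * (2 + σ + K)) := Real.sq_sqrt (by positivity)
  have hε : 0 < ε := Real.sqrt_pos.mpr (by positivity)
  have hδ : 0 < δ := Real.sqrt_pos.mpr (by positivity)
  have hε1 : ε ≤ 1 := by
    have h1 : ε ^ 2 ≤ 1 := by
      rw [hε2, div_le_one (by positivity)]
      linarith
    nlinarith
  have hδ4 : δ < 4 := by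
    have h1 : δ ^ 2 ≤ 1 := by
      rw [hδ2, div_le_one (by positivity)]
      linarith
    nlinarith
  have hεK : 2 + σ + K ≤ K / (2 * ε ^ 2) := by
    have : K / (2 * ε ^ 2) = 2 + σ + K := by
      rw [hε2]
      field_simp
    linarith [this.ge]
  have hδσ : 2 + σ + K ≤ σ / (2 * δ ^ 2) := by
    have : σ / (2 * δ ^ 2) = 2 + σ + K := by
      rw [hδ2]
      field_simp
    linarith [this.ge]
  have hmain := key_bound u husc hbound hint hbd σ K ε δ hσ hK hε hδ hε1 hδ4 hεK hδσ
  intro q hq hq1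
  have h := hmain q hq
  have ht4 : 0 < 4 - q.2 := by linarith [hq.2.2]
  have h1 : σ * ((4 - q.2) ^ 2 + δ ^ 2)⁻¹ ≤ σ / (4 - q.2) ^ 2 := by
    rw [div_eq_mul_inv]
    apply mul_le_mul_of_nonneg_left _ hσ.le
    apply inv_anti₀ (by positivity)
    nlinarith [sq_nonneg δ]
  have h2 : K * (q.1 ^ 2 + ε ^ 2)⁻¹ ≤ K / q.1 ^ 2 := by
    rw [div_eq_mul_inv]
    apply mul_le_mul_of_nonneg_left _ hK.le
    apply inv_anti₀ (by positivity)
    nlinarith [sq_nonneg ε]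
  unfold phi at h
  linarith

/-- A priori bound on sub-solutions: `u(x,t) ≤ t/4` on `(0,1]×[0,4)`, and in
particular `u(x,0) = 0` for `x ∈ (0,1]`. -/
theorem subsolution_apriori_bound (u : ℝ × ℝ → ℝ)
    (husc : UpperSemicontinuousOn u (Set.Icc 0 1 ×ˢ Set.Ico (0:ℝ) 4))
    (hbound : ∀ p ∈ Set.Icc 0 1 ×ˢ Set.Ico (0:ℝ) 4, 0 ≤ u p ∧ u p ≤ 1 - p.1)
    (hint : ∀ p : ℝ × ℝ, p.1 ∈ Set.Ioo (0:ℝ) 1 → p.2 ∈ Set.Ioo (0:ℝ) 4 →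
      SubSolAt u (Set.Icc 0 1 ×ˢ Set.Ico (0:ℝ) 4) p)
    (hbd : ∀ p ∈ parabolicBoundary, p ∈ Set.Icc 0 1 ×ˢ Set.Ico (0:ℝ) 4 →
      SubSolAt u (Set.Icc 0 1 ×ˢ Set.Ico (0:ℝ) 4) p ∨ u p ≤ BC p) :
    (∀ x ∈ Set.Ioc (0:ℝ) 1, ∀ t ∈ Set.Ico (0:ℝ) 4, u (x, t) ≤ t / 4) ∧
    (∀ x ∈ Set.Ioc (0:ℝ) 1, u (x, 0) = 0) := by
  have hmain : ∀ x ∈ Set.Ioc (0:ℝ) 1, ∀ t ∈ Set.Ico (0:ℝ) 4, u (x, t) ≤ t / 4 := by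
    intro x hx t ht
    have hxD : ((x : ℝ), t) ∈ Set.Icc 0 1 ×ˢ Set.Ico (0:ℝ) 4 :=
      ⟨⟨hx.1.le, hx.2⟩, ht⟩
    by_contra hcon
    push_neg at hcon
    set η : ℝ := u (x, t) - t / 4 with hηdef
    have hηpos : 0 < η := sub_pos.mpr hcon
    have ht4 : 0 < 4 - t := by linarith [ht.2]
    set σ : ℝ := η / 4 * (4 - t) ^ 2 with hσdef
    set K : ℝ := η / 4 * x ^ 2 with hKdef
    have hσ : 0 < σ := by positivity
    have hK : 0 < K := by have := hx.1; positivity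
    have h0 := key_bound' u husc hbound hint hbd σ K hσ hK (x, t) hxD hx.1
    have h : u (x, t) ≤ t / 4 + σ / (4 - t) ^ 2 + K / x ^ 2 := h0
    have h4ne : (4 - t) ≠ 0 := by linarith
    have hxne : x ≠ 0 := hx.1.ne'
    have h1 : σ / (4 - t) ^ 2 = η / 4 := by
      rw [hσdef]
      field_simp
    have h2 : K / x ^ 2 = η / 4 := by
      rw [hKdef]
      field_simp
    rw [h1, h2] at h
    have : u (x, t) ≤ t / 4 + η / 4 + η / 4 := h
    have : η ≤ η / 2 := by linarith
    linarith
  refine ⟨hmain, ?_⟩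
  intro x hx
  have h1 := hmain x hx 0 ⟨le_refl 0, by norm_num⟩
  have h2 := (hbound (x, 0) ⟨⟨hx.1.le, hx.2⟩, ⟨le_refl 0, by norm_num⟩⟩).1
  have h3 : (0:ℝ) / 4 = 0 := by norm_num
  linarith [h1, h2]
end

section
/- Consistency of the discrete Hamiltonian: let λ = λ(N) satisfy λ → 0 and Nλ → ∞ as N → ∞, r = (1+λ)/(1-λ), and H^N(x,y,z) = (1/(λ log r)) ((1+λ)/2 · r^{N(y-x)} + (1-λ)/2 · r^{N(y-z)} - 1). Let φ be C² in a neighbourhood of a point (x,t) and let x_N → x. Then H^N(φ(x_N - 1/N, t), φ(x_N, t), φ(x_N + 1/N, t)) → ∂_x φ(x,t) + (∂_x φ(x,t))², as N → ∞. -/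
/-!
With `r = (1 + λ) / (1 - λ)` write `r ^ s = exp (s log r)` and `a, b` for the backward and the
negated forward difference quotients of `φ(·, t)` at `x_N`; they tend to `±∂ₓφ`. A second-order
expansion of `exp` gives
`H^N = (a + b) / (2λ) + (a - b) / 2 + (log r / λ) (a² + b²) / 4 + o(1)`.
The second difference `a + b` is `O(1/N)` because `φ` is `C²`, so `(a + b) / λ → 0` as `Nλ → ∞`,
and `log r / λ → 2`; the limit is `∂ₓφ + 2 · 2 (∂ₓφ)² / 4`.
-/

open Real Filter Topology Asymptotics

variable {ι : Type*} {l : Filter ι}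

section FiniteDifferences

variable {g : ℝ → ℝ} {x : ℝ}

theorem ContDiffAt.contDiffAt_deriv {m n : WithTop ℕ∞} (hg : ContDiffAt ℝ n g x)
    (hmn : m + 1 ≤ n) : ContDiffAt ℝ m (deriv g) x :=
  (hg.fderiv_right hmn).clm_apply contDiffAt_const

/-- The derivative is locally Lipschitz, so the mean value inequality on `[y, z]` bounds the
first-order Taylor remainder by `K (z - y)²`. -/
theorem ContDiffAt.exists_abs_sub_sub_deriv_mul_le (hg : ContDiffAt ℝ 2 g x) :
    ∃ K : ℝ, ∃ s ∈ 𝓝 x, ∀ y ∈ s, ∀ z ∈ s,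
      |g z - g y - deriv g y * (z - y)| ≤ K * (z - y) ^ 2 := by
  obtain ⟨K, t, ht, hlip⟩ := (hg.contDiffAt_deriv (m := 1) le_rfl).exists_lipschitzOnWith
  have hdiff : ∀ᶠ y in 𝓝 x, DifferentiableAt ℝ g y :=
    (hg.eventually (by simp)).mono fun y hy => hy.differentiableAt (by norm_num)
  obtain ⟨ε, hε, hball⟩ := Metric.mem_nhds_iff.mp (inter_mem ht hdiff)
  refine ⟨K, Metric.ball x ε, Metric.ball_mem_nhds x hε, fun y hy z hz => ?_⟩
  have hyz : Set.uIcc y z ⊆ t ∩ {y | DifferentiableAt ℝ g y} :=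
    ((convex_ball x ε).ordConnected.uIcc_subset hy hz).trans hball
  have hderiv : ∀ w ∈ Set.uIcc y z,
      HasDerivWithinAt (fun w => g w - deriv g y * w) (deriv g w - deriv g y) (Set.uIcc y z) w :=
    fun w hw => (((hyz hw).2.hasDerivAt).sub ((hasDerivAt_id w).const_mul _) |>.congr_deriv
      (by simp)).hasDerivWithinAt
  have hbound : ∀ w ∈ Set.uIcc y z, ‖deriv g w - deriv g y‖ ≤ K * |z - y| := by
    intro w hw
    have hlipw := hlip.dist_le_mul w (hyz hw).1 y (hyz Set.left_mem_uIcc).1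
    rw [Real.dist_eq, Real.dist_eq] at hlipw
    exact hlipw.trans (mul_le_mul_of_nonneg_left (Set.abs_sub_left_of_mem_uIcc hw) K.coe_nonneg)
  have hmvt := (convex_uIcc y z).norm_image_sub_le_of_norm_hasDerivWithin_le hderiv hbound
    Set.left_mem_uIcc Set.right_mem_uIcc
  rw [Real.norm_eq_abs, Real.norm_eq_abs] at hmvt
  calc |g z - g y - deriv g y * (z - y)| = |g z - deriv g y * z - (g y - deriv g y * y)| := by
        ring_nf
    _ ≤ K * |z - y| * |z - y| := hmvt
    _ = K * (z - y) ^ 2 := by rw [mul_assoc, abs_mul_abs_self, sq]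

theorem ContDiffAt.isBigO_sub_sub_deriv_mul (hg : ContDiffAt ℝ 2 g x) {y h : ι → ℝ}
    (hy : Tendsto y l (𝓝 x)) (hh : Tendsto h l (𝓝 0)) :
    (fun i => g (y i + h i) - g (y i) - deriv g (y i) * h i) =O[l] fun i => h i ^ 2 := by
  obtain ⟨K, s, hs, hK⟩ := hg.exists_abs_sub_sub_deriv_mul_le
  have hyh : Tendsto (fun i => y i + h i) l (𝓝 x) := by simpa using hy.add hh
  refine IsBigO.of_bound K ?_
  filter_upwards [hy hs, hyh hs] with i hyi hyhi
  simpa [abs_of_nonneg (sq_nonneg (h i))] using hK _ hyi _ hyhi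

theorem ContDiffAt.tendsto_slope_of_tendsto (hg : ContDiffAt ℝ 2 g x) {y h : ι → ℝ}
    (hy : Tendsto y l (𝓝 x)) (hh : Tendsto h l (𝓝 0)) (hh0 : ∀ᶠ i in l, h i ≠ 0) :
    Tendsto (fun i => (g (y i + h i) - g (y i)) / h i) l (𝓝 (deriv g x)) := by
  have hderiv : Tendsto (fun i => deriv g (y i)) l (𝓝 (deriv g x)) :=
    (hg.contDiffAt_deriv (m := 1) le_rfl).continuousAt.tendsto.comp hy
  have hrem : (fun i => (g (y i + h i) - g (y i) - deriv g (y i) * h i) * (h i)⁻¹) =O[l] h :=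
    ((hg.isBigO_sub_sub_deriv_mul hy hh).mul (isBigO_refl (fun i => (h i)⁻¹) l)).trans
      ((isBigO_refl h l).congr_left fun i => by rw [sq, mul_self_mul_inv])
  have hlim := (hrem.trans_tendsto hh).add hderiv
  rw [zero_add] at hlim
  refine hlim.congr' ?_
  filter_upwards [hh0] with i hi
  field_simp
  ring

theorem ContDiffAt.isBigO_second_difference (hg : ContDiffAt ℝ 2 g x) {y h : ι → ℝ}
    (hy : Tendsto y l (𝓝 x)) (hh : Tendsto h l (𝓝 0)) :
    (fun i => g (y i + h i) + g (y i - h i) - 2 * g (y i)) =O[l] fun i => h i ^ 2 := by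
  have hforward := hg.isBigO_sub_sub_deriv_mul hy hh
  have hbackward := hg.isBigO_sub_sub_deriv_mul hy (by simpa using hh.neg)
  simp only [← sub_eq_add_neg, neg_sq] at hbackward
  refine (hforward.add hbackward).congr_left fun i => ?_
  ring

theorem ContDiffAt.tendsto_backward_difference (hg : ContDiffAt ℝ 2 g x) {y : ℕ → ℝ}
    (hy : Tendsto y atTop (𝓝 x)) :
    Tendsto (fun N : ℕ => (N : ℝ) * (g (y N) - g (y N - 1 / N))) atTop (𝓝 (deriv g x)) := by
  have hh : Tendsto (fun N : ℕ => -(1 / (N : ℝ))) atTop (𝓝 0) := by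
    simpa only [neg_zero] using (tendsto_one_div_atTop_nhds_zero_nat (𝕜 := ℝ)).neg
  refine (hg.tendsto_slope_of_tendsto hy hh ?_).congr fun N => ?_
  · filter_upwards [eventually_ne_atTop 0] with N hN
    simp [hN]
  · rw [← sub_eq_add_neg, div_neg, div_div_eq_mul_div, div_one]
    ring

theorem ContDiffAt.tendsto_forward_difference (hg : ContDiffAt ℝ 2 g x) {y : ℕ → ℝ}
    (hy : Tendsto y atTop (𝓝 x)) :
    Tendsto (fun N : ℕ => (N : ℝ) * (g (y N) - g (y N + 1 / N))) atTop (𝓝 (-deriv g x)) := by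
  refine (hg.tendsto_slope_of_tendsto hy tendsto_one_div_atTop_nhds_zero_nat ?_).neg.congr
    fun N => ?_
  · filter_upwards [eventually_ne_atTop 0] with N hN
    simp [hN]
  · rw [div_div_eq_mul_div, div_one]
    ring

theorem ContDiffAt.tendsto_sum_differences_div (hg : ContDiffAt ℝ 2 g x) {y : ℕ → ℝ}
    (hy : Tendsto y atTop (𝓝 x)) {ε : ℕ → ℝ} (hε : Tendsto (fun N : ℕ => N * ε N) atTop atTop) :
    Tendsto (fun N : ℕ => ((N : ℝ) * (g (y N) - g (y N - 1 / N)) +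
      N * (g (y N) - g (y N + 1 / N))) / ε N) atTop (𝓝 0) := by
  have hD := hg.isBigO_second_difference hy tendsto_one_div_atTop_nhds_zero_nat
  have hbound : (fun N : ℕ => ((N : ℝ) * (g (y N) - g (y N - 1 / N)) +
      N * (g (y N) - g (y N + 1 / N))) / ε N) =O[atTop] fun N => ((N : ℝ) * ε N)⁻¹ := by
    refine (((isBigO_refl (fun N : ℕ => (N : ℝ)) atTop).mul hD).mul
      (isBigO_refl (fun N => (ε N)⁻¹) atTop)).neg_left.congr' ?_ ?_
    · exact Eventually.of_forall fun N => by ring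
    · filter_upwards [eventually_ne_atTop 0] with N hN
      field_simp
  exact hbound.trans_tendsto hε.inv_tendsto_atTop

end FiniteDifferences

theorem tendsto_log_one_add_div_one_sub_div_self :
    Tendsto (fun s : ℝ => log ((1 + s) / (1 - s)) / s) (𝓝[≠] 0) (𝓝 2) := by
  have hratio : HasDerivAt (fun s : ℝ => (1 + s) / (1 - s)) 2 0 :=
    (((hasDerivAt_id 0).const_add 1).div ((hasDerivAt_id 0).const_sub 1) (by norm_num)).congr_deriv
      (by norm_num)
  have hslope := (hratio.log (by norm_num)).tendsto_slope_zero
  simp only [zero_add, add_zero, sub_zero, div_one, log_one, smul_eq_mul] at hslope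
  exact hslope.congr fun s => inv_mul_eq_div _ _

theorem tendsto_exp_mul_sub_taylor_div_sq {L c : ι → ℝ} {q : ℝ} (hL : Tendsto L l (𝓝 0))
    (hc : Tendsto c l (𝓝 q)) :
    Tendsto (fun i => (exp (L i * c i) - 1 - L i * c i - (L i * c i) ^ 2 / 2) / L i ^ 2)
      l (𝓝 0) := by
  have hLc : Tendsto (fun i => L i * c i) l (𝓝 0) := by simpa using hL.mul hc
  have hrem := (exp_sub_sum_range_succ_isLittleO_pow 2).comp_tendsto hLc
  have hsq : (fun i => (L i * c i) ^ 2) =O[l] fun i => L i ^ 2 := by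
    simpa [mul_pow] using (isBigO_refl (fun i => L i ^ 2) l).mul ((hc.pow 2).isBigO_one ℝ)
  refine (hrem.trans_isBigO hsq).tendsto_div_nhds_zero.congr fun i => ?_
  simp only [Finset.sum_range_succ, Finset.range_one, Finset.sum_singleton, pow_zero, pow_one,
    Nat.factorial, Nat.cast_one, div_one, Function.comp_apply]
  ring

theorem tendsto_hamiltonian_of_tendsto {lam L a b : ι → ℝ} {p : ℝ}
    (hlam : Tendsto lam l (𝓝 0)) (hlam_ne : ∀ᶠ i in l, lam i ≠ 0)
    (hL : Tendsto (fun i => L i / lam i) l (𝓝 2))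
    (ha : Tendsto a l (𝓝 p)) (hb : Tendsto b l (𝓝 (-p)))
    (hab : Tendsto (fun i => (a i + b i) / lam i) l (𝓝 0)) :
    Tendsto (fun i => 1 / (lam i * L i) *
      ((1 + lam i) / 2 * exp (L i * a i) + (1 - lam i) / 2 * exp (L i * b i) - 1))
      l (𝓝 (p + p ^ 2)) := by
  have hL0 : Tendsto L l (𝓝 0) := by
    refine (by simpa using hL.mul hlam : Tendsto (fun i => L i / lam i * lam i) l (𝓝 0)).congr' ?_
    filter_upwards [hlam_ne] with i hi
    exact div_mul_cancel₀ _ hi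
  have hL_ne : ∀ᶠ i in l, L i ≠ 0 := by
    filter_upwards [hL.eventually_ne two_ne_zero] with i hi
    exact (div_ne_zero_iff.mp hi).1
  set Ra := fun i => (exp (L i * a i) - 1 - L i * a i - (L i * a i) ^ 2 / 2) / L i ^ 2
  set Rb := fun i => (exp (L i * b i) - 1 - L i * b i - (L i * b i) ^ 2 / 2) / L i ^ 2
  have hRa : Tendsto Ra l (𝓝 0) := tendsto_exp_mul_sub_taylor_div_sq hL0 ha
  have hRb : Tendsto Rb l (𝓝 0) := tendsto_exp_mul_sub_taylor_div_sq hL0 hb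
  have hlim := (((hab.div_const 2).add ((ha.sub hb).div_const 2)).add
    (hL.mul ((((ha.pow 2).add (hb.pow 2)).add ((hRa.add hRb).const_mul 2)).div_const 4))).add
    (hL0.mul ((((ha.pow 2).sub (hb.pow 2)).add ((hRa.sub hRb).const_mul 2)).div_const 4))
  convert hlim.congr' ?_ using 2
  · ring
  filter_upwards [hlam_ne, hL_ne] with i hlam_i hL_i
  simp only [Ra, Rb]
  field_simp
  ring

theorem discrete_hamiltonian_consistency_general
    (lam : ℕ → ℝ)
    (hlam0 : Tendsto lam atTop (nhds 0))
    (hNlam : Tendsto (fun N : ℕ => (N : ℝ) * lam N) atTop atTop)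
    (φ : ℝ × ℝ → ℝ) (x t : ℝ) (V : Set (ℝ × ℝ)) (hV : V ∈ nhds (x, t))
    (hφ : ContDiffOn ℝ 2 φ V)
    (xN : ℕ → ℝ) (hxN : Tendsto xN atTop (nhds x)) :
    Tendsto (fun N : ℕ =>
      1 / (lam N * Real.log ((1 + lam N) / (1 - lam N))) *
        ((1 + lam N) / 2 * ((1 + lam N) / (1 - lam N)) ^
            ((N : ℝ) * (φ (xN N, t) - φ (xN N - 1 / N, t))) +
         (1 - lam N) / 2 * ((1 + lam N) / (1 - lam N)) ^
            ((N : ℝ) * (φ (xN N, t) - φ (xN N + 1 / N, t))) - 1))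
      atTop
      (nhds (fderiv ℝ φ (x, t) (1, 0) + (fderiv ℝ φ (x, t) (1, 0)) ^ 2)) := by
  have hφx : ContDiffAt ℝ 2 φ (x, t) := hφ.contDiffAt hV
  have hg : ContDiffAt ℝ 2 (fun y => φ (y, t)) x :=
    hφx.comp x (contDiff_prodMk_left t).contDiffAt
  have hderiv : deriv (fun y => φ (y, t)) x = fderiv ℝ φ (x, t) (1, 0) :=
    ((hφx.differentiableAt (by norm_num)).hasFDerivAt.comp_hasDerivAt x
      ((hasDerivAt_id x).prodMk (hasDerivAt_const x t))).deriv
  have hlam_pos : ∀ᶠ N in atTop, 0 < lam N :=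
    (hNlam.eventually_gt_atTop 0).mono fun N hN => pos_of_mul_pos_right hN N.cast_nonneg
  have hlam_lt : ∀ᶠ N in atTop, lam N < 1 := hlam0.eventually (gt_mem_nhds one_pos)
  have hlog : Tendsto (fun N => log ((1 + lam N) / (1 - lam N)) / lam N) atTop (𝓝 2) :=
    tendsto_log_one_add_div_one_sub_div_self.comp
      (tendsto_nhdsWithin_iff.mpr ⟨hlam0, hlam_pos.mono fun N h => h.ne'⟩)
  rw [← hderiv]
  refine (tendsto_hamiltonian_of_tendsto hlam0 (hlam_pos.mono fun N h => h.ne') hlog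
    (hg.tendsto_backward_difference hxN) (hg.tendsto_forward_difference hxN)
    (hg.tendsto_sum_differences_div hxN hNlam)).congr' ?_
  filter_upwards [hlam_pos, hlam_lt] with N hpos hlt
  have hr : 0 < (1 + lam N) / (1 - lam N) := div_pos (by linarith) (by linarith)
  rw [rpow_def_of_pos hr, rpow_def_of_pos hr]

/-- Consistency of the discrete Hamiltonian: it converges to
`∂_x φ + (∂_x φ)²` as `N → ∞`, when `λ → 0` and `Nλ → ∞`. -/
theorem discrete_hamiltonian_consistency
    (lam : ℕ → ℝ) (hlam : ∀ N, lam N ∈ Set.Ioo (0:ℝ) 1)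
    (hlam0 : Tendsto lam atTop (nhds 0))
    (hNlam : Tendsto (fun N : ℕ => (N : ℝ) * lam N) atTop atTop)
    (φ : ℝ × ℝ → ℝ) (x t : ℝ) (V : Set (ℝ × ℝ)) (hV : V ∈ nhds (x, t))
    (hφ : ContDiffOn ℝ 2 φ V)
    (xN : ℕ → ℝ) (hxN : Tendsto xN atTop (nhds x)) :
    Tendsto (fun N : ℕ =>
      1 / (lam N * Real.log ((1 + lam N) / (1 - lam N))) *
        ((1 + lam N) / 2 * ((1 + lam N) / (1 - lam N)) ^
            ((N : ℝ) * (φ (xN N, t) - φ (xN N - 1 / N, t))) +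
         (1 - lam N) / 2 * ((1 + lam N) / (1 - lam N)) ^
            ((N : ℝ) * (φ (xN N, t) - φ (xN N + 1 / N, t))) - 1))
      atTop
      (nhds (fderiv ℝ φ (x, t) (1, 0) + (fderiv ℝ φ (x, t) (1, 0)) ^ 2)) :=
  discrete_hamiltonian_consistency_general lam hlam0 hNlam φ x t V hV hφ xN hxN
end

section
/- Discrete comparison principle: fix N ≥ 1 and a function G : ℝ³ × {1,…,N-1} → ℝ which is continuous, locally Lipschitz in (x,y,z), and non-increasing in its first and third arguments. Let u, v : {0,1/N,…,1} × [0,∞) → ℝ be differentiable in t and satisfy: ∂_t u(k/N, t) + G(u((k-1)/N,t), u(k/N,t), u((k+1)/N,t), k) ≤ 0 and ∂_t v(k/N, t) + G(v((k-1)/N,t), v(k/N,t), v((k+1)/N,t), k) ≥ 0 for all 1 ≤ k ≤ N-1 and t ≥ 0, together with u(0,t) ≤ v(0,t), u(1,t) ≤ v(1,t) for all t ≥ 0 and u(k/N,0) ≤ v(k/N,0) for all k. Then u(k/N,t) ≤ v(k/N,t) for all k and all t ≥ 0. -/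
/-!
Weight the difference by `exp (-C t)`, with `C` larger than a Lipschitz constant `L` of `G` on a
box containing all values that occur, and take a point `(j₀, t₀)` of `{0, …, N} × [0, T]` where
`(u j t - v j t) * exp (-C t)` is maximal. If `δ = u j₀ t₀ - v j₀ t₀` were positive, the initial
and boundary conditions would force `t₀ > 0` and `0 < j₀ < N`. Maximality in time gives
`u' - v' ≥ C δ` at `(j₀, t₀)`; maximality in space gives `u (j₀ ± 1) ≤ v (j₀ ± 1) + δ`, so by
monotonicity `G (u) ≥ G (v + δ)`, and the two differential inequalities yield
`u' - v' ≤ G (v) - G (v + δ) ≤ L δ < C δ`.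
-/

open Real Set Filter Topology NNReal

theorem HasDerivAt.nonneg_of_eventually_le_left {f : ℝ → ℝ} {d b : ℝ} (hd : HasDerivAt f d b)
    (hmax : ∀ᶠ s in 𝓝[<] b, f s ≤ f b) : 0 ≤ d := by
  have hslope := (hasDerivWithinAt_iff_tendsto_slope' (s := Iio b) (by simp)).1 hd.hasDerivWithinAt
  refine ge_of_tendsto hslope ?_
  filter_upwards [hmax, self_mem_nhdsWithin] with s hs hsb
  rw [slope_def_field]
  exact div_nonneg_of_nonpos (sub_nonpos.2 hs) (sub_nonpos.2 (le_of_lt hsb))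

theorem hasDerivAt_sub_mul_exp {f g : ℝ → ℝ} {f' g' C t : ℝ} (hf : HasDerivAt f f' t)
    (hg : HasDerivAt g g' t) :
    HasDerivAt (fun s => (f s - g s) * exp (-C * s))
      ((f' - g' - C * (f t - g t)) * exp (-C * t)) t := by
  refine ((hf.sub hg).mul ((hasDerivAt_id' t).const_mul (-C)).exp).congr_deriv ?_
  simp only [Pi.sub_apply]
  ring

theorem IsCompact.exists_bound_of_continuousOn_finset {ι X : Type*} [TopologicalSpace X]
    {K : Set X} (hK : IsCompact K) (s : Finset ι) {f : ι → X → ℝ}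
    (hf : ∀ i ∈ s, ContinuousOn (f i) K) : ∃ R, ∀ i ∈ s, ∀ x ∈ K, |f i x| ≤ R := by
  obtain ⟨R, hR⟩ := hK.exists_bound_of_continuousOn
    (continuousOn_finsetSum s fun i hi => (hf i hi).abs)
  refine ⟨R, fun i hi x hx => ?_⟩
  calc |f i x| ≤ ∑ j ∈ s, |f j x| := Finset.single_le_sum (fun j _ => abs_nonneg (f j x)) hi
    _ ≤ R := (le_abs_self _).trans (by simpa using hR x hx)

theorem IsCompact.exists_forall_ge_of_continuousOn_finset {ι X : Type*} [TopologicalSpace X]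
    {K : Set X} (hK : IsCompact K) (hKne : K.Nonempty) {s : Finset ι} (hs : s.Nonempty)
    {f : ι → X → ℝ} (hf : ∀ i ∈ s, ContinuousOn (f i) K) :
    ∃ i ∈ s, ∃ x ∈ K, ∀ j ∈ s, ∀ y ∈ K, f j y ≤ f i x := by
  have hmax : ∀ i ∈ s, ∃ x ∈ K, ∀ y ∈ K, f i y ≤ f i x := fun i hi =>
    hK.exists_isMaxOn hKne (hf i hi)
  have : Nonempty X := ⟨hKne.some⟩
  choose! x hxK hx using hmax
  obtain ⟨i, hi, hi_max⟩ := s.exists_max_image (fun j => f j (x j)) hs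
  exact ⟨i, hi, x i, hxK i hi, fun j hj y hy => (hx j hj y hy).trans (hi_max j hj)⟩

theorem sub_le_of_antitone_of_lipschitzOnWith {g : ℝ → ℝ → ℝ → ℝ} {K : Set (ℝ × ℝ × ℝ)}
    {L : ℝ≥0} (hg : LipschitzOnWith L (fun p : ℝ × ℝ × ℝ => g p.1 p.2.1 p.2.2) K)
    (hg₁ : ∀ y z, Antitone fun x => g x y z) (hg₃ : ∀ x y, Antitone fun z => g x y z)
    {x z x' y' z' δ : ℝ} (hδ : 0 ≤ δ) (hx : x ≤ x' + δ) (hz : z ≤ z' + δ)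
    (hp : (x', y', z') ∈ K) (hq : (x' + δ, y' + δ, z' + δ) ∈ K) :
    g x' y' z' - g x (y' + δ) z ≤ L * δ := by
  have hmono : g (x' + δ) (y' + δ) (z' + δ) ≤ g x (y' + δ) z :=
    (hg₃ _ _ hz).trans (hg₁ _ _ hx)
  have hdist : dist (x', y', z') (x' + δ, y' + δ, z' + δ) = δ := by
    simp [Prod.dist_eq, abs_of_nonneg hδ]
  have hlip := hg.dist_le_mul _ hp _ hq
  rw [hdist, Real.dist_eq] at hlip
  linarith [le_abs_self (g x' y' z' - g (x' + δ) (y' + δ) (z' + δ))]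

theorem exists_lipschitzOnWith_of_finset {ι α β : Type*} [PseudoMetricSpace α]
    [PseudoMetricSpace β] {f : ι → α → β} (hf : ∀ i, LocallyLipschitz (f i)) {K : Set α}
    (hK : IsCompact K) (s : Finset ι) : ∃ L, ∀ i ∈ s, LipschitzOnWith L (f i) K := by
  choose L hL using fun i => (hf i).locallyLipschitzOn.exists_lipschitzOnWith_of_compact hK
  exact ⟨s.sup L, fun i hi => (hL i).weaken (Finset.le_sup hi)⟩

theorem continuousOn_Icc_of_hasDerivAt {N : ℕ} {f f' : ℕ → ℝ → ℝ}
    (hf : ∀ (k : ℕ) (t : ℝ), k ≤ N → 0 ≤ t → HasDerivAt (f k) (f' k t) t) (T : ℝ) :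
    ∀ k ∈ Finset.range (N + 1), ContinuousOn (f k) (Icc 0 T) := fun k hk t ht =>
  (hf k t (Finset.mem_range_succ_iff.1 hk) ht.1).continuousAt.continuousWithinAt

theorem add_mem_Icc_of_abs_le {x y z δ Ru Rv : ℝ} (hx : |x| ≤ Rv) (hy : |y| ≤ Ru)
    (hz : |z| ≤ Rv) (hδ : δ ∈ Icc 0 (y - z)) : x + δ ∈ Icc (-(Ru + 2 * Rv)) (Ru + 2 * Rv) := by
  rw [abs_le] at hx hy hz
  constructor <;> linarith [hδ.1, hδ.2]

theorem le_of_isMaxOn_sub_mul_exp {N : ℕ} {G : ℝ → ℝ → ℝ → ℕ → ℝ}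
    {u v u' v' : ℕ → ℝ → ℝ} {I : Set ℝ} {L : ℝ≥0} {C : ℝ} (hC : L < C)
    (hGlip : ∀ k < N, LipschitzOnWith L (fun p : ℝ × ℝ × ℝ => G p.1 p.2.1 p.2.2 k) (I ×ˢ I ×ˢ I))
    (hGmono1 : ∀ (y z : ℝ) (k : ℕ), Antitone fun x => G x y z k)
    (hGmono3 : ∀ (x y : ℝ) (k : ℕ), Antitone fun z => G x y z k)
    (hu : ∀ (k : ℕ) (t : ℝ), k ≤ N → 0 ≤ t → HasDerivAt (u k) (u' k t) t)
    (hv : ∀ (k : ℕ) (t : ℝ), k ≤ N → 0 ≤ t → HasDerivAt (v k) (v' k t) t)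
    (hsub : ∀ (k : ℕ) (t : ℝ), 1 ≤ k → k ≤ N - 1 → 0 ≤ t →
      u' k t + G (u (k - 1) t) (u k t) (u (k + 1) t) k ≤ 0)
    (hsup : ∀ (k : ℕ) (t : ℝ), 1 ≤ k → k ≤ N - 1 → 0 ≤ t →
      0 ≤ v' k t + G (v (k - 1) t) (v k t) (v (k + 1) t) k)
    (hb0 : ∀ t : ℝ, 0 ≤ t → u 0 t ≤ v 0 t)
    (hbN : ∀ t : ℝ, 0 ≤ t → u N t ≤ v N t)
    (hinit : ∀ k : ℕ, k ≤ N → u k 0 ≤ v k 0)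
    {j₀ : ℕ} {t₀ : ℝ} (hj₀ : j₀ ≤ N) (ht₀ : 0 ≤ t₀)
    (hI : ∀ j ≤ N, ∀ δ ∈ Icc 0 (u j₀ t₀ - v j₀ t₀), v j t₀ + δ ∈ I)
    (hmax : ∀ j ≤ N, ∀ s ∈ Icc 0 t₀,
      (u j s - v j s) * exp (-C * s) ≤ (u j₀ t₀ - v j₀ t₀) * exp (-C * t₀)) :
    u j₀ t₀ ≤ v j₀ t₀ := by
  by_contra! hpos
  set δ := u j₀ t₀ - v j₀ t₀ with hδ_def
  have hδ : 0 < δ := sub_pos.2 hpos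
  have hnb : ∀ j ≤ N, u j t₀ - v j t₀ ≤ δ := fun j hj =>
    le_of_mul_le_mul_right (hmax j hj t₀ ⟨ht₀, le_rfl⟩) (exp_pos _)
  have ht₀pos : 0 < t₀ := ht₀.lt_of_ne (by rintro rfl; linarith [hinit j₀ hj₀])
  have hj₀pos : 1 ≤ j₀ := Nat.one_le_iff_ne_zero.2 (by rintro rfl; linarith [hb0 t₀ ht₀])
  have hj₀N : j₀ < N := hj₀.lt_of_ne (by rintro rfl; linarith [hbN t₀ ht₀])
  have hderiv : C * δ ≤ u' j₀ t₀ - v' j₀ t₀ := by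
    have hd := (hasDerivAt_sub_mul_exp (C := C) (hu j₀ t₀ hj₀ ht₀)
      (hv j₀ t₀ hj₀ ht₀)).nonneg_of_eventually_le_left <| by
        filter_upwards [Ioo_mem_nhdsLT ht₀pos] with s hs
        exact hmax j₀ hj₀ s ⟨hs.1.le, hs.2.le⟩
    linarith [(mul_nonneg_iff_of_pos_right (exp_pos _)).1 hd]
  have hmem : ∀ δ' ∈ Icc 0 δ,
      (v (j₀ - 1) t₀ + δ', v j₀ t₀ + δ', v (j₀ + 1) t₀ + δ') ∈ I ×ˢ I ×ˢ I := fun δ' hδ' =>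
    ⟨hI _ (by omega) δ' hδ', hI _ hj₀ δ' hδ', hI _ hj₀N δ' hδ'⟩
  have hlip := sub_le_of_antitone_of_lipschitzOnWith (hGlip j₀ hj₀N) (hGmono1 · · j₀)
    (hGmono3 · · j₀) hδ.le (x := u (j₀ - 1) t₀) (z := u (j₀ + 1) t₀)
    (by linarith [hnb (j₀ - 1) (by omega)]) (by linarith [hnb (j₀ + 1) hj₀N])
    (by simpa using hmem 0 ⟨le_rfl, hδ.le⟩) (hmem δ ⟨hδ.le, le_rfl⟩)
  rw [hδ_def, add_sub_cancel] at hlip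
  linarith [mul_lt_mul_of_pos_right hC hδ, hsub j₀ t₀ hj₀pos (by omega) ht₀,
    hsup j₀ t₀ hj₀pos (by omega) ht₀]

theorem discrete_comparison_general (N : ℕ)
    (G : ℝ → ℝ → ℝ → ℕ → ℝ)
    (hGlip : ∀ k : ℕ, LocallyLipschitz fun p : ℝ × ℝ × ℝ => G p.1 p.2.1 p.2.2 k)
    (hGmono1 : ∀ (y z : ℝ) (k : ℕ), Antitone fun x => G x y z k)
    (hGmono3 : ∀ (x y : ℝ) (k : ℕ), Antitone fun z => G x y z k)
    (u v u' v' : ℕ → ℝ → ℝ)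
    (hu : ∀ (k : ℕ) (t : ℝ), k ≤ N → 0 ≤ t → HasDerivAt (u k) (u' k t) t)
    (hv : ∀ (k : ℕ) (t : ℝ), k ≤ N → 0 ≤ t → HasDerivAt (v k) (v' k t) t)
    (hsub : ∀ (k : ℕ) (t : ℝ), 1 ≤ k → k ≤ N - 1 → 0 ≤ t →
      u' k t + G (u (k - 1) t) (u k t) (u (k + 1) t) k ≤ 0)
    (hsup : ∀ (k : ℕ) (t : ℝ), 1 ≤ k → k ≤ N - 1 → 0 ≤ t →
      0 ≤ v' k t + G (v (k - 1) t) (v k t) (v (k + 1) t) k)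
    (hb0 : ∀ t : ℝ, 0 ≤ t → u 0 t ≤ v 0 t)
    (hbN : ∀ t : ℝ, 0 ≤ t → u N t ≤ v N t)
    (hinit : ∀ k : ℕ, k ≤ N → u k 0 ≤ v k 0) :
    ∀ (k : ℕ) (t : ℝ), k ≤ N → 0 ≤ t → u k t ≤ v k t := by
  intro k t hk ht
  obtain ⟨Ru, hRu⟩ := isCompact_Icc.exists_bound_of_continuousOn_finset _
    (continuousOn_Icc_of_hasDerivAt hu t)
  obtain ⟨Rv, hRv⟩ := isCompact_Icc.exists_bound_of_continuousOn_finset _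
    (continuousOn_Icc_of_hasDerivAt hv t)
  set I := Icc (-(Ru + 2 * Rv)) (Ru + 2 * Rv)
  obtain ⟨L, hL⟩ := exists_lipschitzOnWith_of_finset hGlip
    ((isCompact_Icc (a := -(Ru + 2 * Rv))).prod (isCompact_Icc.prod isCompact_Icc)) (Finset.range N)
  obtain ⟨j₀, hj₀, t₀, ht₀, hmax⟩ := isCompact_Icc.exists_forall_ge_of_continuousOn_finset
    (nonempty_Icc.2 ht) ⟨0, by simp⟩ (f := fun j s => (u j s - v j s) * exp (-(L + 1) * s))
    fun j hj => ((continuousOn_Icc_of_hasDerivAt hu t j hj).sub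
      (continuousOn_Icc_of_hasDerivAt hv t j hj)).mul (by fun_prop)
  have hle : ∀ j ≤ N, j ∈ Finset.range (N + 1) := fun j => Finset.mem_range_succ_iff.2
  have hI : ∀ j ≤ N, ∀ δ ∈ Icc 0 (u j₀ t₀ - v j₀ t₀), v j t₀ + δ ∈ I := fun j hj δ hδ =>
    add_mem_Icc_of_abs_le (hRv j (hle j hj) t₀ ht₀) (hRu j₀ hj₀ t₀ ht₀) (hRv j₀ hj₀ t₀ ht₀) hδ
  rw [Finset.mem_range_succ_iff] at hj₀
  have hj₀_le := le_of_isMaxOn_sub_mul_exp (lt_add_one (L : ℝ))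
    (fun k hk => hL k (Finset.mem_range.2 hk)) hGmono1 hGmono3 hu hv hsub hsup hb0 hbN hinit
    hj₀ ht₀.1 hI fun j hj s hs => hmax j (hle j hj) s ⟨hs.1, hs.2.trans ht₀.2⟩
  have hneg : (u j₀ t₀ - v j₀ t₀) * exp (-(L + 1) * t₀) ≤ 0 :=
    mul_nonpos_of_nonpos_of_nonneg (sub_nonpos.2 hj₀_le) (exp_pos _).le
  exact sub_nonpos.1 <| nonpos_of_mul_nonpos_left
    ((hmax k (hle k hk) t ⟨ht, le_rfl⟩).trans hneg) (exp_pos _)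

/-- Discrete comparison principle for a monotone system of ODEs. -/
theorem discrete_comparison (N : ℕ) (hN : 1 ≤ N)
    (G : ℝ → ℝ → ℝ → ℕ → ℝ)
    (hGcont : ∀ k : ℕ, Continuous fun p : ℝ × ℝ × ℝ => G p.1 p.2.1 p.2.2 k)
    (hGlip : ∀ k : ℕ, LocallyLipschitz fun p : ℝ × ℝ × ℝ => G p.1 p.2.1 p.2.2 k)
    (hGmono1 : ∀ (y z : ℝ) (k : ℕ), Antitone fun x => G x y z k)
    (hGmono3 : ∀ (x y : ℝ) (k : ℕ), Antitone fun z => G x y z k)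
    (u v u' v' : ℕ → ℝ → ℝ)
    (hu : ∀ (k : ℕ) (t : ℝ), k ≤ N → 0 ≤ t → HasDerivAt (u k) (u' k t) t)
    (hv : ∀ (k : ℕ) (t : ℝ), k ≤ N → 0 ≤ t → HasDerivAt (v k) (v' k t) t)
    (hsub : ∀ (k : ℕ) (t : ℝ), 1 ≤ k → k ≤ N - 1 → 0 ≤ t →
      u' k t + G (u (k - 1) t) (u k t) (u (k + 1) t) k ≤ 0)
    (hsup : ∀ (k : ℕ) (t : ℝ), 1 ≤ k → k ≤ N - 1 → 0 ≤ t →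
      0 ≤ v' k t + G (v (k - 1) t) (v k t) (v (k + 1) t) k)
    (hb0 : ∀ t : ℝ, 0 ≤ t → u 0 t ≤ v 0 t)
    (hbN : ∀ t : ℝ, 0 ≤ t → u N t ≤ v N t)
    (hinit : ∀ k : ℕ, k ≤ N → u k 0 ≤ v k 0) :
    ∀ (k : ℕ) (t : ℝ), k ≤ N → 0 ≤ t → u k t ≤ v k t :=
  discrete_comparison_general N G hGlip hGmono1 hGmono3 u v u' v' hu hv hsub hsup hb0 hbN hinit
end

section
/- Explicit lower barrier for the unscaled hydrodynamics: fix N ≥ 1, λ ∈ (0,1), and set H^N(x,y,z) = -(N/λ)((1+λ)/2 (x-y) + (1-λ)/2 (z-y)). Define f(k,t) = 1 - (Nλ)^{2/3} (t - k/N + (Nλ)^{-1/3})_+² - t (Nλ)^{-1/3} for 0 ≤ k ≤ N, t ≥ 0. Then f is a sub-solution of the scheme ∂_t u(k,t) + H^N(u(k-1,t), u(k,t), u(k+1,t)) = 0 with boundary conditions u(0,t) = 0, u(N,t) = 1, u(k,0) = 1; that is, f(0,t) ≤ 0, f(N,t) ≤ 1, f(k,0) ≤ 1, and ∂_t f(k,t)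 + H^N(f(k-1,t), f(k,t), f(k+1,t)) ≤ 0 for 1 ≤ k ≤ N-1, t ≥ 0. -/
/-!
With `c = (Nλ)^(-1/3)` and `A = (Nλ)^(2/3) = Nλc`, the barrier is
`1 - A g(t - k/N + c) - t c` for `g x = max x 0 ^ 2`. This `g` is `C¹` with `2`-Lipschitz
derivative, so `g (s ± h) ≤ (max s 0 ± h)²`. In the scheme the first-order parts of these bounds
cancel the time derivative of `-A g`, and the second-order parts leave `(N/λ) A N⁻² = c`, which
the slope `-c` of the linear term absorbs; this treats all positions of `t` relative to the grid
at once.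
-/

open Real Asymptotics

lemma sq_max_zero_le_sq_add (x y : ℝ) : max y 0 ^ 2 ≤ (max x 0 + (y - x)) ^ 2 := by
  rcases le_total 0 x with hx | hx <;> rcases le_total 0 y with hy | hy <;>
    simp only [max_eq_left, max_eq_right, hx, hy] <;> nlinarith

lemma sq_max_zero_add_le (x y : ℝ) : max x 0 ^ 2 + 2 * max x 0 * (y - x) ≤ max y 0 ^ 2 := by
  rcases le_total 0 x with hx | hx <;> rcases le_total 0 y with hy | hy <;>
    simp only [max_eq_left, max_eq_right, hx, hy] <;> nlinarith [sq_nonneg (y - x)]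

lemma hasDerivAt_sq_max_zero (x : ℝ) :
    HasDerivAt (fun y : ℝ => max y 0 ^ 2) (2 * max x 0) x := by
  refine .of_isLittleO (IsBigO.trans_isLittleO (g := fun y => ‖y - x‖ ^ 2) ?_
    (isLittleO_pow_sub_sub x one_lt_two))
  refine .of_bound 1 (.of_forall fun y => ?_)
  simp only [Real.norm_eq_abs, sq_abs, smul_eq_mul, one_mul, abs_pow]
  rw [abs_le]
  constructor <;> nlinarith [sq_max_zero_le_sq_add x y, sq_max_zero_add_le x y]

def barrierProfile (A c x t : ℝ) : ℝ := 1 - A * max (t - x + c) 0 ^ 2 - t * c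

lemma hasDerivAt_barrierProfile (A c x t : ℝ) :
    HasDerivAt (barrierProfile A c x) (-(A * (2 * max (t - x + c) 0)) - c) t := by
  have hshift : HasDerivAt (fun s : ℝ => s - x + c) 1 t :=
    ((hasDerivAt_id t).sub_const x).add_const c
  have hsq := (hasDerivAt_sq_max_zero (t - x + c)).comp t hshift
  have h := ((hsq.const_mul A).const_sub 1).sub ((hasDerivAt_id' t).mul_const c)
  rw [mul_one, one_mul] at h
  exact h

lemma barrierProfile_le_one {A c : ℝ} (hA : 0 ≤ A) (hc : 0 ≤ c) (x : ℝ) {t : ℝ} (ht : 0 ≤ t) :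
    barrierProfile A c x t ≤ 1 := by
  unfold barrierProfile
  nlinarith [mul_nonneg hA (sq_nonneg (max (t - x + c) 0)), mul_nonneg ht hc]

lemma barrierProfile_zero_nonpos {A c : ℝ} (hA : 0 ≤ A) (hc : 0 ≤ c) (hAc : A * c ^ 2 = 1)
    {t : ℝ} (ht : 0 ≤ t) : barrierProfile A c 0 t ≤ 0 := by
  unfold barrierProfile
  rw [sub_zero, max_eq_left (by linarith)]
  nlinarith [mul_nonneg (mul_nonneg hA ht) ht, mul_nonneg (mul_nonneg hA ht) hc, mul_nonneg ht hc]

lemma weighted_diff_sq_max_zero_le {lam : ℝ} (hlam : |lam| ≤ 1) (s h : ℝ) :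
    (1 + lam) / 2 * (max (s + h) 0 ^ 2 - max s 0 ^ 2)
      + (1 - lam) / 2 * (max (s - h) 0 ^ 2 - max s 0 ^ 2)
      ≤ 2 * lam * h * max s 0 + h ^ 2 := by
  obtain ⟨hlo, hhi⟩ := abs_le.mp hlam
  have hplus := sq_max_zero_le_sq_add s (s + h)
  have hminus := sq_max_zero_le_sq_add s (s - h)
  nlinarith [mul_le_mul_of_nonneg_left hplus (by linarith : (0:ℝ) ≤ (1 + lam) / 2),
    mul_le_mul_of_nonneg_left hminus (by linarith : (0:ℝ) ≤ (1 - lam) / 2)]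

lemma barrierProfile_scheme_le {N lam c : ℝ} (hN : 0 < N) (hlam : lam ∈ Set.Ioc (0:ℝ) 1)
    (hc : 0 ≤ c) (x t : ℝ) :
    deriv (barrierProfile (N * lam * c) c x) t
      + -(N / lam) * ((1 + lam) / 2 * (barrierProfile (N * lam * c) c (x - 1 / N) t
          - barrierProfile (N * lam * c) c x t)
        + (1 - lam) / 2 * (barrierProfile (N * lam * c) c (x + 1 / N) t
          - barrierProfile (N * lam * c) c x t)) ≤ 0 := by
  obtain ⟨hlam0, hlam1⟩ := hlam
  rw [(hasDerivAt_barrierProfile _ _ _ _).deriv]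
  set s := t - x + c
  have hdiff := weighted_diff_sq_max_zero_le (abs_le.mpr ⟨by linarith, hlam1⟩) s (1 / N)
  unfold barrierProfile
  rw [show t - (x - 1 / N) + c = s + 1 / N by ring, show t - (x + 1 / N) + c = s - 1 / N by ring]
  have hscale : 0 ≤ N ^ 2 * c := by positivity
  have hbound := mul_le_mul_of_nonneg_left hdiff hscale
  have hrhs : N ^ 2 * c * (2 * lam * (1 / N) * max s 0 + (1 / N) ^ 2)
      = N * lam * c * (2 * max s 0) + c := by field_simp
  have hN2 : N / lam * (N * lam * c) = N ^ 2 * c := by field_simp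
  linear_combination hbound + hrhs + ((1 + lam) / 2 * (max (s + 1 / N) 0 ^ 2 - max s 0 ^ 2)
    + (1 - lam) / 2 * (max (s - 1 / N) 0 ^ 2 - max s 0 ^ 2)) * hN2

/-- The explicit barrier `f` is a sub-solution of the linear discrete scheme. -/
theorem barrier_subsolution (N : ℕ) (hN : 1 ≤ N)
    (lam : ℝ) (hlam : lam ∈ Set.Ioo (0:ℝ) 1)
    (H : ℝ → ℝ → ℝ → ℝ)
    (hH : ∀ x y z : ℝ, H x y z =
      -((N : ℝ) / lam) * ((1 + lam) / 2 * (x - y) + (1 - lam) / 2 * (z - y)))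
    (f : ℕ → ℝ → ℝ)
    (hf : ∀ (k : ℕ) (t : ℝ), f k t =
      1 - ((N : ℝ) * lam) ^ ((2:ℝ)/3) *
            (max (t - (k : ℝ) / N + ((N : ℝ) * lam) ^ (-(1:ℝ)/3)) 0) ^ 2 -
          t * ((N : ℝ) * lam) ^ (-(1:ℝ)/3)) :
    (∀ t : ℝ, 0 ≤ t → f 0 t ≤ 0) ∧
    (∀ t : ℝ, 0 ≤ t → f N t ≤ 1) ∧
    (∀ k : ℕ, k ≤ N → f k 0 ≤ 1) ∧
    (∀ (k : ℕ) (t : ℝ), 1 ≤ k → k ≤ N - 1 → 0 ≤ t →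
      deriv (fun s => f k s) t + H (f (k - 1) t) (f k t) (f (k + 1) t) ≤ 0) := by
  obtain ⟨hlam0, hlam1⟩ := hlam
  have hN0 : (0:ℝ) < N := by exact_mod_cast hN
  have hNlam : 0 < (N:ℝ) * lam := mul_pos hN0 hlam0
  set c := ((N:ℝ) * lam) ^ (-(1:ℝ)/3) with hc_def
  have hc : 0 ≤ c := (rpow_pos_of_pos hNlam _).le
  have hA : ((N:ℝ) * lam) ^ ((2:ℝ)/3) = N * lam * c := by
    rw [hc_def, ← rpow_one_add' hNlam.le (by norm_num)]
    norm_num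
  have hAc : N * lam * c * c ^ 2 = 1 := by
    rw [mul_assoc, ← pow_succ', hc_def, ← rpow_natCast, ← rpow_mul hNlam.le]
    norm_num [rpow_neg_one]
    field_simp
  have hfk : ∀ k : ℕ, f k = barrierProfile (N * lam * c) c (k / N) :=
    fun k => funext fun t => by rw [hf, hA]; rfl
  refine ⟨fun t ht => ?_, fun t ht => ?_, fun k _ => ?_, fun k t hk1 _ _ => ?_⟩
  · rw [hfk, Nat.cast_zero, zero_div]
    exact barrierProfile_zero_nonpos (by positivity) hc hAc ht
  · rw [hfk]
    exact barrierProfile_le_one (by positivity) hc _ ht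
  · rw [hfk]
    exact barrierProfile_le_one (by positivity) hc _ le_rfl
  · have hprev : ((k - 1 : ℕ) : ℝ) / N = k / N - 1 / N := by
      rw [Nat.cast_sub hk1, Nat.cast_one, sub_div]
    have hnext : ((k + 1 : ℕ) : ℝ) / N = k / N + 1 / N := by
      rw [Nat.cast_succ, add_div]
    rw [hH, hfk, hfk, hfk, hprev, hnext]
    exact barrierProfile_scheme_le hN0 ⟨hlam0, hlam1.le⟩ hc _ t
end
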